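/- For each n ≥ 1, the functions fₙ of Lück's example satisfy ∫₀¹ fₙ(λ)/λ dλ ≤ 4. -/

import Mathlib

/-!
Split `(0, 1)` at `e^{-3n} < e^{-2n} < e^{-n}`. On the four pieces `fₙ(λ) ≤ λ + k` with
`k = 0, 1/(2n), 1/n, 1/n + e^{-n}`, so `fₙ(λ)/λ ≤ 1 + k/λ`; the last three pieces have
logarithmic length `n`, so the integral is at most `1 + 1/2 + 1 + (1 + n e^{-n}) ≤ 4`, as
`n e^{-n} ≤ 1/2`. Integrability holds because `fₙ(λ)/λ` is measurable, nonnegative and bounded: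
it equals `1` near `0`.
-/

/-- Lück's example function `fₙ : [0,1] → ℝ`, defined piecewise:
`fₙ(λ) = λ` for `0 ≤ λ ≤ e^{-3n}`; linear interpolation on `[e^{-3n}, e^{-2n}]`;
`fₙ(λ) = 1/(-ln λ) + λ` on `[e^{-2n}, e^{-n}]`; constant `1/n + e^{-n}` on
`[e^{-n}, 1/n + e^{-n}]`; and `fₙ(λ) = λ` on `[1/n + e^{-n}, 1]`. -/
noncomputable def luckF (n : ℕ) (x : ℝ) : ℝ :=
  if x ≤ Real.exp (-(3 * n : ℝ)) then x
  else if x ≤ Real.exp (-(2 * n : ℝ)) then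
    ((Real.exp (-(2 * n : ℝ)) - x) * Real.exp (-(3 * n : ℝ))
        + (x - Real.exp (-(3 * n : ℝ))) * (1 / (2 * n : ℝ) + Real.exp (-(2 * n : ℝ))))
      / (Real.exp (-(2 * n : ℝ)) - Real.exp (-(3 * n : ℝ)))
  else if x ≤ Real.exp (-(n : ℝ)) then 1 / (-Real.log x) + x
  else if x ≤ 1 / (n : ℝ) + Real.exp (-(n : ℝ)) then 1 / (n : ℝ) + Real.exp (-(n : ℝ))
  else x

open MeasureTheory

open Real Set

theorem Real.mul_exp_neg_le_half (x : ℝ) : x * exp (-x) ≤ 1 / 2 := by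
  rw [exp_neg, ← div_eq_mul_inv, div_le_iff₀ (exp_pos x)]
  linarith [two_mul_le_exp (x := x)]

theorem Real.log_exp_div_exp (p q : ℝ) : log (exp p / exp q) = p - q := by
  rw [← exp_sub, log_exp]

theorem intervalIntegral.integral_div_le_of_le_add {f : ℝ → ℝ} {u v k : ℝ} (hu : 0 < u)
    (huv : u ≤ v) (hf : IntervalIntegrable (fun x => f x / x) volume u v)
    (hfk : ∀ x ∈ Ioo u v, f x ≤ x + k) :
    ∫ x in u..v, f x / x ≤ v - u + k * log (v / u) := by
  have hinv : IntervalIntegrable (fun x : ℝ => x⁻¹) volume u v :=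
    intervalIntegral.intervalIntegrable_inv
      (fun x hx => ((uIcc_of_le huv ▸ hx).1.trans_lt' hu).ne') continuousOn_id
  calc ∫ x in u..v, f x / x ≤ ∫ x in u..v, (1 + k * x⁻¹) := by
        refine intervalIntegral.integral_mono_on_of_le_Ioo huv hf
          (intervalIntegrable_const.add (hinv.const_mul k)) fun x hx => ?_
        have hx0 : 0 < x := hu.trans hx.1
        rw [div_le_iff₀ hx0, add_mul, mul_assoc, inv_mul_cancel₀ hx0.ne']
        linarith [hfk x hx]
    _ = v - u + k * log (v / u) := by
        rw [intervalIntegral.integral_add intervalIntegrable_const (hinv.const_mul k),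
          intervalIntegral.integral_const_mul, integral_inv_of_pos hu (hu.trans_le huv)]
        simp

section Luck

variable {n : ℕ} {x : ℝ}

theorem luckF_eq_self_of_le (h : x ≤ exp (-(3 * n : ℝ))) : luckF n x = x := if_pos h

theorem exp_neg_three_mul_lt_exp_neg_two_mul (hn : 0 < n) :
    exp (-(3 * n : ℝ)) < exp (-(2 * n : ℝ)) := by
  have : (0 : ℝ) < n := by exact_mod_cast hn
  exact exp_lt_exp.2 (by linarith)

theorem exp_neg_two_mul_lt_exp_neg (hn : 0 < n) : exp (-(2 * n : ℝ)) < exp (-(n : ℝ)) := by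
  have : (0 : ℝ) < n := by exact_mod_cast hn
  exact exp_lt_exp.2 (by linarith)

theorem luckF_nonneg (hn : 0 < n) (hx : 0 ≤ x) : 0 ≤ luckF n x := by
  have hab := exp_neg_three_mul_lt_exp_neg_two_mul hn
  have hn' : (0 : ℝ) < n := by exact_mod_cast hn
  unfold luckF
  split_ifs with h₁ h₂ h₃ h₄
  · exact hx
  · exact div_nonneg (add_nonneg (mul_nonneg (sub_nonneg.2 h₂) (exp_pos _).le)
      (mul_nonneg (sub_nonneg.2 (not_le.1 h₁).le) (by positivity))) (sub_nonneg.2 hab.le)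
  · have hlog : log x < 0 :=
      log_neg (by linarith [exp_pos (-(3 * n : ℝ))]) (h₃.trans_lt (by simpa using hn'))
    have : 0 < 1 / -log x := by rw [one_div_pos]; linarith
    linarith
  · positivity
  · exact hx

theorem luckF_le_add_inv_two_mul (hn : 0 < n) (h : x ≤ exp (-(2 * n : ℝ))) :
    luckF n x ≤ x + 1 / (2 * n : ℝ) := by
  have hab := exp_neg_three_mul_lt_exp_neg_two_mul hn
  have hk : (0 : ℝ) ≤ 1 / (2 * n : ℝ) := by positivity
  unfold luckF
  split_ifs with h₁
  · linarith
  · -- the interpolant is `x + k (x - a) / (b - a)` for `a = e^{-3n}`, `b = e^{-2n}`, `k = 1/(2n)`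
    rw [div_le_iff₀ (sub_pos.2 hab)]
    nlinarith [not_le.1 h₁]

theorem luckF_le_add_inv (hn : 0 < n) (hx : 0 < x) (h : x ≤ exp (-(n : ℝ))) :
    luckF n x ≤ x + 1 / (n : ℝ) := by
  have hn' : (0 : ℝ) < n := by exact_mod_cast hn
  rcases le_or_gt x (exp (-(2 * n : ℝ))) with hb | hb
  · calc luckF n x ≤ x + 1 / (2 * n : ℝ) := luckF_le_add_inv_two_mul hn hb
      _ ≤ x + 1 / (n : ℝ) := by gcongr; linarith
  have hlog : (n : ℝ) ≤ -log x := by linarith [(log_le_iff_le_exp hx).2 h]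
  have hab := exp_neg_three_mul_lt_exp_neg_two_mul hn
  unfold luckF
  rw [if_neg (by linarith), if_neg (not_le.2 hb), if_pos h, add_comm x]
  gcongr

theorem luckF_le_add (hn : 0 < n) (hx : 0 < x) :
    luckF n x ≤ x + (1 / (n : ℝ) + exp (-(n : ℝ))) := by
  rcases le_or_gt x (exp (-(n : ℝ))) with hd | hd
  · linarith [luckF_le_add_inv hn hx hd, exp_pos (-(n : ℝ))]
  have hbd := exp_neg_two_mul_lt_exp_neg hn
  have hab := exp_neg_three_mul_lt_exp_neg_two_mul hn
  unfold luckF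
  rw [if_neg (by linarith), if_neg (by linarith), if_neg (not_le.2 hd)]
  split_ifs <;> linarith [one_div_pos.2 (Nat.cast_pos.2 hn : (0 : ℝ) < n), exp_pos (-(n : ℝ))]

theorem measurable_luckF : Measurable (luckF n) := by
  unfold luckF
  refine Measurable.ite measurableSet_Iic measurable_id ?_
  refine Measurable.ite measurableSet_Iic (by fun_prop) ?_
  refine Measurable.ite measurableSet_Iic (by fun_prop) ?_
  exact Measurable.ite measurableSet_Iic measurable_const measurable_id

theorem integrableOn_luckF_div (hn : 0 < n) :
    IntegrableOn (fun x => luckF n x / x) (Ioc 0 1) := by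
  have hc : 0 < 1 / (n : ℝ) + exp (-(n : ℝ)) := by positivity
  refine Measure.integrableOn_of_bounded
    (M := 1 + (1 / (n : ℝ) + exp (-(n : ℝ))) / exp (-(3 * n : ℝ))) measure_Ioc_lt_top.ne
    (measurable_luckF.div measurable_id).aestronglyMeasurable
    ((ae_restrict_iff' measurableSet_Ioc).2 (Filter.Eventually.of_forall fun x hx => ?_))
  rw [norm_of_nonneg (div_nonneg (luckF_nonneg hn hx.1.le) hx.1.le)]
  rcases le_or_gt x (exp (-(3 * n : ℝ))) with ha | ha
  · rw [luckF_eq_self_of_le ha]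
    linarith [div_self_le_one x, div_pos hc (exp_pos (-(3 * n : ℝ)))]
  calc luckF n x / x ≤ (x + (1 / (n : ℝ) + exp (-(n : ℝ)))) / x :=
        div_le_div_of_nonneg_right (luckF_le_add hn hx.1) hx.1.le
    _ = 1 + (1 / (n : ℝ) + exp (-(n : ℝ))) / x := by rw [add_div, div_self hx.1.ne']
    _ ≤ _ := by gcongr

theorem integral_luckF_div_le (hn : 0 < n) :
    ∫ x in (0)..1, luckF n x / x ≤ 7 / 2 + n * exp (-(n : ℝ)) := by
  have hab := exp_neg_three_mul_lt_exp_neg_two_mul hn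
  have hbd := exp_neg_two_mul_lt_exp_neg hn
  have hd1 : exp (-(n : ℝ)) ≤ 1 := exp_le_one_iff.2 (by linarith)
  have ha0 := exp_pos (-(3 * n : ℝ))
  have hint : ∀ {u v : ℝ}, 0 ≤ u → u ≤ v → v ≤ 1 →
      IntervalIntegrable (fun x => luckF n x / x) volume u v := fun hu huv hv =>
    ((intervalIntegrable_iff_integrableOn_Ioc_of_le zero_le_one).2
      (integrableOn_luckF_div hn)).mono_set (by
        rw [uIcc_of_le huv, uIcc_of_le zero_le_one]; exact Icc_subset_Icc hu hv)
  rw [← intervalIntegral.integral_add_adjacent_intervals (b := exp (-(n : ℝ)))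
      (hint le_rfl (by linarith) hd1) (hint (by linarith) hd1 le_rfl),
    ← intervalIntegral.integral_add_adjacent_intervals (b := exp (-(2 * n : ℝ)))
      (hint le_rfl (by linarith) (by linarith)) (hint (by linarith) hbd.le hd1),
    ← intervalIntegral.integral_add_adjacent_intervals (b := exp (-(3 * n : ℝ)))
      (hint le_rfl ha0.le (by linarith)) (hint ha0.le hab.le (by linarith))]
  have h₁ : ∫ x in (0)..exp (-(3 * n : ℝ)), luckF n x / x ≤ exp (-(3 * n : ℝ)) := by
    calc _ ≤ ∫ _ in (0)..exp (-(3 * n : ℝ)), (1 : ℝ) :=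
          intervalIntegral.integral_mono_on ha0.le (hint le_rfl ha0.le (by linarith))
            intervalIntegrable_const fun x hx => by
              rw [luckF_eq_self_of_le hx.2]; exact div_self_le_one x
      _ = _ := by simp
  have h₂ := intervalIntegral.integral_div_le_of_le_add ha0 hab.le
    (hint ha0.le hab.le (by linarith)) fun x hx => luckF_le_add_inv_two_mul hn hx.2.le
  have h₃ := intervalIntegral.integral_div_le_of_le_add (exp_pos _) hbd.le
    (hint (exp_pos _).le hbd.le hd1)
    fun x hx => luckF_le_add_inv hn ((exp_pos _).trans hx.1) hx.2.le
  have h₄ := intervalIntegral.integral_div_le_of_le_add (exp_pos _) hd1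
    (hint (exp_pos _).le hd1 le_rfl) fun x hx => luckF_le_add hn ((exp_pos _).trans hx.1)
  rw [log_exp_div_exp] at h₂ h₃
  rw [one_div (exp _), log_inv, log_exp] at h₄
  have hsum : 1 / (2 * n : ℝ) * (-(2 * n) - -(3 * n)) + 1 / n * (-n - -(2 * n))
      + (1 / n + exp (-(n : ℝ))) * -(-(n : ℝ)) = 5 / 2 + n * exp (-(n : ℝ)) := by
    field_simp; ring
  linarith

end Luck

/-- For each `n ≥ 1`, `∫₀¹ fₙ(λ)/λ dλ ≤ 4` (and this integral exists). -/
theorem stmt7 (n : ℕ) (hn : 1 ≤ n) :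
    IntegrableOn (fun x => luckF n x / x) (Set.Ioo (0 : ℝ) 1) ∧
    (∫ x in Set.Ioo (0 : ℝ) 1, luckF n x / x) ≤ 4 := by
  refine ⟨(integrableOn_luckF_div hn).mono_set Ioo_subset_Ioc_self, ?_⟩
  rw [← integral_Ioc_eq_integral_Ioo, ← intervalIntegral.integral_of_le zero_le_one]
  linarith [integral_luckF_div_le hn, mul_exp_neg_le_half (n : ℝ)]
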